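/- arXiv:2405.17574 — 9 statements merged into one kernel-verified Lean document; each statement's English description precedes it below -/
import Mathlib

section
/- Let $X$ be an infinite compact metric space and $f: X \to X$ a homeomorphism satisfying the gluing-orbit property. Then there exists $\varepsilon_0 > 0$ such that for every $\varepsilon \in (0, \varepsilon_0)$ and every $x \in X$ there exist a nonempty compact perfect set $C_x \subseteq W^s_\varepsilon(x)$ and a nonempty compact perfect set $D_x \subseteq W^u_\varepsilon(x)$. -/
open Function Metric Filter

variable {X : Type*}

/-- `(c, t)` is `ε`-traced by `z`: an orbit sequence `c = (x_j, m_j)_{j ∈ ℕ}` with gap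
`t = (t_j)_{j ∈ ℕ}` is `ε`-traced by `z` if `d(f^(s_j + l)(z), f^l(x_j)) ≤ ε` for all
`0 ≤ l ≤ m_j`, where `s_j = ∑_{i<j} (m_i + t_i)`. -/
def TracedBy [MetricSpace X] (f : X → X) (c : ℕ → X × ℕ) (t : ℕ → ℕ) (ε : ℝ) (z : X) : Prop :=
  ∀ j l, l ≤ (c j).2 →
    dist (f^[(∑ i ∈ Finset.range j, ((c i).2 + t i)) + l] z) (f^[l] (c j).1) ≤ ε

/-- `f` has the gluing-orbit property: for each `ε > 0` there is `M ∈ ℕ` such that every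
orbit sequence admits a gap with entries in `{1, …, M}` so that the pair is `ε`-traced by
some point. -/
def GluingOrbit [MetricSpace X] (f : X → X) : Prop :=
  ∀ ε : ℝ, 0 < ε → ∃ M : ℕ, ∀ c : ℕ → X × ℕ, ∃ t : ℕ → ℕ,
    (∀ j, 1 ≤ t j ∧ t j ≤ M) ∧ ∃ z : X, TracedBy f c t ε z
/-- The `ε`-stable set of `x`. -/
def Ws [MetricSpace X] (f : X → X) (ε : ℝ) (x : X) : Set X :=
  {y | ∀ k : ℕ, dist (f^[k] y) (f^[k] x) ≤ ε}
/-- The `ε`-unstable set of `x` (for a homeomorphism `f`): the points whose backward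
iterates stay `ε`-close to those of `x`. -/
def Wu [MetricSpace X] (f : X ≃ₜ X) (ε : ℝ) (x : X) : Set X :=
  {y | ∀ k : ℕ, dist ((f.symm : X → X)^[k] y) ((f.symm : X → X)^[k] x) ≤ ε}

/-!
Since gluing-orbit passes from `f` to `f⁻¹` (trace the reversed finite orbit sequences and take
a limit) and `W^u_ε(x)` for `f` is `W^s_ε(x)` for `f⁻¹`, only stable sets need to be treated.

The heart of the matter is that no `W^s_β(x)` with `β > 0` is a singleton. If it were, gluing an
arbitrary orbit segment to the orbit of `x` would show that the points eventually mapped onto `x`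
are dense, and, the gaps being bounded by some `M`, that they lie in `M + 1` stable sets of radius
`β / 2`, each of which contains at most one of them; so `X` would be finite.

Hence the forward orbits, with the sup (Bowen) distance, form a complete metric space without
isolated points in which `W^s_ε(x)` is a closed ball. A ball of positive radius there is
uncountable, so the closed set `W^s_ε(x)` is uncountable and contains a nonempty perfect set by
Cantor–Bendixson.
-/

open Topology
open scoped BoundedContinuousFunction

section Tracing

variable [MetricSpace X]

def TracedUpTo (f : X → X) (c : ℕ → X × ℕ) (t : ℕ → ℕ) (ε : ℝ) (z : X) (n : ℕ) : Prop :=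
  ∀ j ≤ n, ∀ l ≤ (c j).2,
    dist (f^[(∑ i ∈ Finset.range j, ((c i).2 + t i)) + l] z) (f^[l] (c j).1) ≤ ε

lemma isClosed_setOf_dist_iterate_le {f : X → X} (hf : Continuous f) (n : ℕ) (p : X) (ε : ℝ) :
    IsClosed {y | dist (f^[n] y) p ≤ ε} :=
  isClosed_le ((hf.iterate n).dist continuous_const) continuous_const

lemma GluingOrbit.of_tracedUpTo [CompactSpace X] {f : X → X} (hf : Continuous f)
    (h : ∀ ε > 0, ∃ M : ℕ, ∀ c n, ∃ t : ℕ → ℕ,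
      (∀ j, 1 ≤ t j ∧ t j ≤ M) ∧ ∃ z, TracedUpTo f c t ε z n) :
    GluingOrbit f := by
  intro ε hε
  obtain ⟨M, hM⟩ := h ε hε
  refine ⟨M, fun c => ?_⟩
  choose t ht z hz using hM c
  let 𝒰 := Ultrafilter.of (atTop : Filter ℕ)
  have hgap : ∀ i, ∃ v ∈ Set.Icc 1 M, ∀ᶠ n in 𝒰, t n i = v := fun i =>
    (Ultrafilter.eventually_exists_mem_iff (Set.finite_Icc 1 M)).mp
      (Eventually.of_forall fun n => ⟨t n i, ht n i, rfl⟩)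
  choose v hv hvt using hgap
  refine ⟨v, hv, (𝒰.map z).lim, fun j l hl => ?_⟩
  refine (isClosed_setOf_dist_iterate_le hf _ _ ε).mem_of_tendsto (𝒰.map z).le_nhds_lim ?_
  filter_upwards [Ultrafilter.of_le (atTop : Filter ℕ) (eventually_ge_atTop j),
    (Finset.range j).eventually_all.2 fun i _ => hvt i] with n hjn hvn
  have hsum : ∑ i ∈ Finset.range j, ((c i).2 + v i) = ∑ i ∈ Finset.range j, ((c i).2 + t n i) :=
    Finset.sum_congr rfl fun i hi => by rw [hvn i hi]
  rw [hsum]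
  exact hz n j hjn l hl

/-- With segment lengths `m` and gaps `t`, the backward start time of segment `j` plus the forward
start time of its mirror image `n - j` plus its length is the total length of `n + 1` segments. -/
lemma sum_range_add_sum_range_reflect (m t : ℕ → ℕ) {n j : ℕ} (hj : j ≤ n) :
    (∑ i ∈ Finset.range j, (m i + t (n - 1 - i)))
      + (∑ i ∈ Finset.range (n - j), (m (n - i) + t i)) + m j
      = (∑ i ∈ Finset.range n, (m (n - i) + t i)) + m 0 := by
  induction j with
  | zero => simp
  | succ j ih =>
    have hsplit : n - j = (n - (j + 1)) + 1 := by omega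
    rw [← ih (by omega), hsplit, Finset.sum_range_succ, Finset.sum_range_succ,
      show n - (n - (j + 1)) = j + 1 by omega, show n - 1 - j = n - (j + 1) by omega]
    ring

lemma Homeomorph.iterate_symm_iterate_add (g : X ≃ₜ X) (a b : ℕ) (y : X) :
    (⇑g.symm)^[a] ((⇑g)^[a + b] y) = (⇑g)^[b] y := by
  rw [Function.iterate_add_apply]
  exact Function.LeftInverse.iterate g.symm_apply_apply a _

lemma Homeomorph.iterate_iterate_symm_add (g : X ≃ₜ X) (a b : ℕ) (y : X) :
    (⇑g)^[a] ((⇑g.symm)^[a + b] y) = (⇑g.symm)^[b] y :=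
  g.symm.iterate_symm_iterate_add a b y

/-- Tracing the segments `(g⁻ᵐʲ xⱼ, mⱼ)`, `j = n, …, 0`, forwards is tracing the segments
`(xⱼ, mⱼ)`, `j = 0, …, n`, backwards from the end of the last one. -/
lemma TracedUpTo.symm (g : X ≃ₜ X) {c : ℕ → X × ℕ} {n : ℕ} {t : ℕ → ℕ} {ε : ℝ} {w : X}
    (h : TracedUpTo g
      (fun j => ((⇑g.symm)^[(c (n - j)).2] (c (n - j)).1, (c (n - j)).2)) t ε w n) :
    TracedUpTo g.symm c (fun i => t (n - 1 - i)) ε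
      ((⇑g)^[(∑ i ∈ Finset.range n, ((c (n - i)).2 + t i)) + (c 0).2] w) n := by
  intro j hj l hl
  have hj' : n - (n - j) = j := by omega
  have htrace := h (n - j) (Nat.sub_le n j) ((c j).2 - l) (by dsimp only; rw [hj']; omega)
  simp only [hj'] at htrace
  set A := ∑ i ∈ Finset.range j, ((c i).2 + t (n - 1 - i))
  set B := ∑ i ∈ Finset.range (n - j), ((c (n - i)).2 + t i)
  have hT : (∑ i ∈ Finset.range n, ((c (n - i)).2 + t i)) + (c 0).2
      = (A + l) + (B + ((c j).2 - l)) := by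
    have := sum_range_add_sum_range_reflect (fun i => (c i).2) t hj
    omega
  rw [hT, g.iterate_symm_iterate_add, ← g.iterate_iterate_symm_add ((c j).2 - l) l,
    Nat.sub_add_cancel hl]
  exact htrace

end Tracing

lemma GluingOrbit.symm [MetricSpace X] [CompactSpace X] {g : X ≃ₜ X} (hg : GluingOrbit g) :
    GluingOrbit g.symm := by
  refine GluingOrbit.of_tracedUpTo g.symm.continuous fun ε hε => ?_
  obtain ⟨M, hM⟩ := hg ε hε
  refine ⟨M, fun c n => ?_⟩
  obtain ⟨t, ht, w, hw⟩ :=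
    hM fun j => ((⇑g.symm)^[(c (n - j)).2] (c (n - j)).1, (c (n - j)).2)
  exact ⟨fun i => t (n - 1 - i), fun i => ht _, _, TracedUpTo.symm g fun j _ => hw j⟩

section StableSets

variable [MetricSpace X] {f : X → X}

lemma isClosed_ws (hf : Continuous f) (ε : ℝ) (x : X) : IsClosed (Ws f ε x) := by
  simp only [Ws, Set.ofPred_forall]
  exact isClosed_iInter fun k => isClosed_setOf_dist_iterate_le hf k _ ε

variable [CompactSpace X]

lemma exists_iterate_mem_ws_of_shadow (hf : Continuous f) (hg : GluingOrbit f) {γ : ℝ}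
    (hγ : 0 < γ) : ∃ M : ℕ, ∀ x u : X, ∀ m : ℕ, ∃ τ ≤ M, ∃ w : X,
      (∀ l ≤ m, dist (f^[l] w) (f^[l] u) ≤ γ) ∧ f^[m + τ] w ∈ Ws f γ x := by
  obtain ⟨M, hM⟩ := hg γ hγ
  refine ⟨M, fun x u m => ?_⟩
  choose t ht z hz using fun n : ℕ => hM fun j => if j = 0 then (u, m) else (x, n)
  let 𝒰 := Ultrafilter.of (atTop : Filter ℕ)
  obtain ⟨τ, hτM, hτ⟩ := (Ultrafilter.eventually_exists_mem_iff (P := fun τ n => t n 0 = τ)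
    (Set.finite_Iic M)).mp (Eventually.of_forall fun n => ⟨t n 0, (ht n 0).2, rfl⟩)
  have hlim := (𝒰.map z).le_nhds_lim
  refine ⟨τ, hτM, (𝒰.map z).lim, fun l hl => ?_, fun k => ?_⟩
  · refine (isClosed_setOf_dist_iterate_le hf l _ γ).mem_of_tendsto hlim
      (Eventually.of_forall fun n => ?_)
    simpa using hz n 0 l (by simpa using hl)
  · rw [← Function.iterate_add_apply, add_comm k]
    refine (isClosed_setOf_dist_iterate_le hf _ _ γ).mem_of_tendsto hlim ?_
    filter_upwards [Ultrafilter.of_le (atTop : Filter ℕ) (eventually_ge_atTop k), hτ]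
      with n hkn hτn
    simpa [hτn, add_assoc] using hz n 1 k (by simpa using hkn)

lemma exists_ws_cover_of_bowen_cover (hf : Continuous f) {γ : ℝ} {M : ℕ} (p : ℕ → ℕ → X)
    (h : ∀ u m, ∃ τ ≤ M, ∀ l ≤ m, dist (f^[l] (p m τ)) (f^[l] u) ≤ γ) :
    ∃ q : ℕ → X, ∀ u, ∃ τ ≤ M, u ∈ Ws f γ (q τ) := by
  let 𝒰 := Ultrafilter.of (atTop : Filter ℕ)
  refine ⟨fun τ => (𝒰.map fun m => p m τ).lim, fun u => ?_⟩
  obtain ⟨τ, hτM, hτ⟩ := (Ultrafilter.eventually_exists_mem_iff (Set.finite_Iic M)).mp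
    (Eventually.of_forall (f := (𝒰 : Filter ℕ)) (h u))
  refine ⟨τ, hτM, fun k => ?_⟩
  rw [dist_comm]
  refine (isClosed_setOf_dist_iterate_le hf k _ γ).mem_of_tendsto
    (𝒰.map fun m => p m τ).le_nhds_lim ?_
  filter_upwards [Ultrafilter.of_le (atTop : Filter ℕ) (eventually_ge_atTop k), hτ]
    with m hkm hm using hm k hkm

end StableSets

lemma subsingleton_ws_half_inter_preimages [MetricSpace X] {f : X → X} (hf : Injective f)
    {β : ℝ} {x : X} (hx : (Ws f β x).Subsingleton) (q : X) :
    (Ws f (β / 2) q ∩ {y | ∃ n, f^[n] y = x}).Subsingleton := by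
  rintro y ⟨hyq, n, rfl⟩ y' ⟨hy'q, -⟩
  have hmem : f^[n] y' ∈ Ws f β (f^[n] y) := fun k => by
    simp only [← Function.iterate_add_apply]
    linarith [dist_triangle_right (f^[k + n] y') (f^[k + n] y) (f^[k + n] q),
      hyq (k + n), hy'q (k + n)]
  have hβ : 0 ≤ β := by linarith [dist_nonneg.trans (hyq 0)]
  have hself : f^[n] y ∈ Ws f β (f^[n] y) := fun k => by simpa using hβ
  exact ((hf.iterate n) (hx hmem hself)).symm

lemma ws_nontrivial [MetricSpace X] [CompactSpace X] [Infinite X] {g : X ≃ₜ X}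
    (hg : GluingOrbit g) {β : ℝ} (hβ : 0 < β) (x : X) : (Ws g β x).Nontrivial := by
  by_contra hx
  rw [Set.not_nontrivial_iff] at hx
  have hfix : ∀ {γ y}, γ ≤ β → y ∈ Ws g γ x → y = x := fun hγ hy =>
    hx (fun k => (hy k).trans hγ) fun k => by simpa using hβ.le
  set P := {y | ∃ n, (⇑g)^[n] y = x}
  have hdense : Dense P := by
    refine Metric.dense_iff.2 fun u r hr => ?_
    obtain ⟨M, hM⟩ := exists_iterate_mem_ws_of_shadow g.continuous hg (lt_min (half_pos hr) hβ)
    obtain ⟨τ, -, w, hwu, hw⟩ := hM x u 0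
    refine ⟨w, mem_ball.2 ?_, 0 + τ, hfix (min_le_right _ _) hw⟩
    have hwu0 : dist w u ≤ min (r / 2) β := by simpa using hwu 0 le_rfl
    linarith [min_le_left (r / 2) β]
  have hfin : P.Finite := by
    obtain ⟨M, hM⟩ := exists_iterate_mem_ws_of_shadow g.continuous hg (half_pos hβ)
    obtain ⟨q, hq⟩ := exists_ws_cover_of_bowen_cover g.continuous
      (fun m τ => (⇑g.symm)^[m + τ] x) fun u m => by
        obtain ⟨τ, hτM, w, hwu, hw⟩ := hM x u m
        refine ⟨τ, hτM, ?_⟩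
        rwa [← hfix (half_le_self hβ.le) hw, Function.LeftInverse.iterate g.symm_apply_apply]
    refine ((Set.finite_Iic M).biUnion fun τ _ =>
      (subsingleton_ws_half_inter_preimages g.injective hx (q τ)).finite).subset fun y hy => ?_
    obtain ⟨τ, hτM, hyq⟩ := hq y
    exact Set.mem_biUnion hτM ⟨hyq, hy⟩
  have hP : P = Set.univ := by simpa [hfin.isClosed.closure_eq] using hdense.closure_eq
  have : Finite X := Set.finite_univ_iff.mp (hP ▸ hfin)
  exact not_finite X

lemma Perfect.not_countable {α : Type*} [MetricSpace α] [CompleteSpace α] {C : Set α}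
    (hC : Perfect C) (hne : C.Nonempty) : ¬ C.Countable := by
  intro hcount
  obtain ⟨φ, hφC, -, hφ⟩ := hC.exists_nat_bool_injection hne
  have huniv : (Set.univ : Set (ℕ → Bool)).Countable :=
    (Set.mapsTo_range φ Set.univ).countable_of_injOn hφ.injOn (hcount.mono hφC)
  have : Uncountable (ℕ → Bool) := by
    rw [← not_countable_iff, ← Cardinal.mk_le_aleph0_iff, not_le]
    simpa using Cardinal.cantor Cardinal.aleph0
  exact Set.not_countable_univ huniv

section ForwardOrbit

variable [MetricSpace X] [CompactSpace X] {f : X → X}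

noncomputable def forwardOrbit (f : X → X) (x : X) : ℕ →ᵇ X :=
  BoundedContinuousFunction.mkOfDiscrete (fun k => f^[k] x) (diam (Set.univ : Set X))
    fun _ _ => dist_le_diam_of_mem isCompact_univ.isBounded trivial trivial

@[simp]
lemma forwardOrbit_apply (x : X) (k : ℕ) : forwardOrbit f x k = f^[k] x := rfl

lemma forwardOrbit_injective : Injective (forwardOrbit f) := fun x y h => by
  simpa using DFunLike.congr_fun h 0

lemma dist_forwardOrbit_le_iff {ε : ℝ} (hε : 0 ≤ ε) {x y : X} :
    dist (forwardOrbit f y) (forwardOrbit f x) ≤ ε ↔ y ∈ Ws f ε x :=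
  BoundedContinuousFunction.dist_le hε

lemma isClosed_range_forwardOrbit (hf : Continuous f) : IsClosed (Set.range (forwardOrbit f)) := by
  have hrange : Set.range (forwardOrbit f) = ⋂ k, {φ | φ k = f^[k] (φ 0)} := by
    ext φ
    simp only [Set.mem_range, Set.mem_iInter, Set.mem_ofPred_eq]
    refine ⟨by rintro ⟨x, rfl⟩ k; simp, fun h => ⟨φ 0, ?_⟩⟩
    ext k
    simp [h k]
  rw [hrange]
  exact isClosed_iInter fun k =>
    isClosed_eq (continuous_eval_const k) ((hf.iterate k).comp (continuous_eval_const 0))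

lemma preperfect_range_forwardOrbit (h : ∀ y, ∀ β > 0, (Ws f β y).Nontrivial) :
    Preperfect (Set.range (forwardOrbit f)) := by
  refine preperfect_iff_nhds.2 ?_
  rintro _ ⟨y, rfl⟩ U hU
  obtain ⟨r, hr, hball⟩ := Metric.mem_nhds_iff.1 hU
  obtain ⟨z, hz, hzy⟩ := (h y (r / 2) (half_pos hr)).exists_ne y
  refine ⟨forwardOrbit f z, ⟨hball ?_, Set.mem_range_self z⟩, forwardOrbit_injective.ne hzy⟩
  exact mem_ball.2 (((dist_forwardOrbit_le_iff (half_pos hr).le).2 hz).trans_lt (half_lt_self hr))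

lemma not_countable_ws (hf : Continuous f) (h : ∀ y, ∀ β > 0, (Ws f β y).Nontrivial) {ε : ℝ}
    (hε : 0 < ε) (x : X) : ¬ (Ws f ε x).Countable := by
  intro hcount
  set C := closure (ball (forwardOrbit f x) ε ∩ Set.range (forwardOrbit f))
  have hperf : Perfect C :=
    ((preperfect_range_forwardOrbit h).open_inter isOpen_ball).perfect_closure
  have hne : C.Nonempty := ⟨_, subset_closure ⟨mem_ball_self hε, Set.mem_range_self x⟩⟩
  have hsub : C ⊆ forwardOrbit f '' Ws f ε x := by
    refine (closure_minimal (Set.inter_subset_inter_left _ ball_subset_closedBall)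
      (isClosed_closedBall.inter (isClosed_range_forwardOrbit hf))).trans ?_
    rintro _ ⟨hb, y, rfl⟩
    exact ⟨y, (dist_forwardOrbit_le_iff hε.le).1 hb, rfl⟩
  exact hperf.not_countable hne ((hcount.image _).mono hsub)

lemma exists_perfect_subset_ws (hf : Continuous f) (h : ∀ y, ∀ β > 0, (Ws f β y).Nontrivial)
    {ε : ℝ} (hε : 0 < ε) (x : X) :
    ∃ C : Set X, C.Nonempty ∧ IsCompact C ∧ Perfect C ∧ C ⊆ Ws f ε x := by
  obtain ⟨C, hC, hne, hsub⟩ := exists_perfect_nonempty_of_isClosed_of_not_countable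
    (isClosed_ws hf ε x) (not_countable_ws hf h hε x)
  exact ⟨C, hne, hC.closed.isCompact, hC, hsub⟩

end ForwardOrbit

/-- **Theorem B.** If `f : X → X` is a homeomorphism of an infinite compact metric space
satisfying the gluing-orbit property, then there is `ε₀ > 0` such that for each
`ε ∈ (0, ε₀)` and each `x ∈ X` there are nonempty compact perfect sets
`C ⊆ W^s_ε(x)` and `D ⊆ W^u_ε(x)`. -/
theorem stmt0 [MetricSpace X] [CompactSpace X] [Infinite X] (f : X ≃ₜ X)
    (hf : GluingOrbit (f : X → X)) :
    ∃ ε₀ : ℝ, 0 < ε₀ ∧ ∀ ε : ℝ, 0 < ε → ε < ε₀ → ∀ x : X,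
      (∃ C : Set X, C.Nonempty ∧ IsCompact C ∧ Perfect C ∧ C ⊆ Ws (f : X → X) ε x) ∧
      (∃ D : Set X, D.Nonempty ∧ IsCompact D ∧ Perfect D ∧ D ⊆ Wu f ε x) :=
  ⟨1, one_pos, fun _ hε _ x =>
    ⟨exists_perfect_subset_ws f.continuous (fun y _ hβ => ws_nontrivial hf hβ y) hε x,
      exists_perfect_subset_ws f.symm.continuous (fun y _ hβ => ws_nontrivial hf.symm hβ y) hε x⟩⟩
end

section
/- Let $X$ be a compact metric space and $f: X \to X$ a map with the gluing-orbit property. Then either $X$ is perfect (has no isolated points), or $X$ consists of a single periodic orbit of $f$ (i.e., there exist $x \in X$ and $n \ge 1$ with $f^n(x) = x$ and $X = \{x, f(x), \ldots, f^{n-1}(x)\}$). -/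
open Function Metric Filter

variable {X : Type*}

/-!
For `ε` below the isolation radius of an isolated point `p`, a point `ε`-tracing an orbit
piece that starts at `p` must be `p` itself. Gluing the orbit pieces
`p` and `y` (both of length zero) therefore shows that the forward orbit of `p` comes
arbitrarily close to every point `y`; with `y = p` it returns exactly, so `p` is periodic.
A periodic orbit is finite, hence closed, and being dense it is all of `X`.
-/

open Set Topology

theorem Function.IsPeriodicPt.range_iterate_eq_image_Iio {α : Type*} {f : α → α} {x : α}
    {n : ℕ} (hx : IsPeriodicPt f n x) (hn : 0 < n) :
    range (fun k => f^[k] x) = (fun k => f^[k] x) '' Iio n := by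
  refine (image_subset_range _ _).antisymm' ?_
  rintro _ ⟨k, rfl⟩
  exact ⟨k % n, Nat.mod_lt k hn, hx.iterate_mod_apply k⟩

theorem Function.IsPeriodicPt.exists_lt_iterate_eq_of_mem_closure {α : Type*}
    [TopologicalSpace α] [T1Space α] {f : α → α} {x y : α} {n : ℕ} (hx : IsPeriodicPt f n x)
    (hn : 0 < n) (hy : y ∈ closure (range fun k => f^[k] x)) : ∃ k < n, f^[k] x = y := by
  rw [hx.range_iterate_eq_image_Iio hn, ((finite_Iio n).image _).isClosed.closure_eq] at hy
  exact hy

namespace GluingOrbit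

variable [MetricSpace X] {f : X → X} {p : X}

theorem exists_iterate_dist_lt_of_isOpen_singleton (hf : GluingOrbit f) (hp : IsOpen {p})
    (y : X) {ε : ℝ} (hε : 0 < ε) : ∃ t, 0 < t ∧ dist (f^[t] p) y < ε := by
  obtain ⟨ε₀, hε₀, hiso⟩ := isOpen_singleton_iff.mp hp
  have hδ : 0 < min ε ε₀ / 2 := by positivity
  have hδε₀ : min ε ε₀ / 2 < ε₀ := by linarith [min_le_right ε ε₀]
  have hδε : min ε ε₀ / 2 < ε := by linarith [min_le_left ε ε₀]
  obtain ⟨M, hM⟩ := hf _ hδ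
  obtain ⟨t, ht, z, hz⟩ := hM fun j => (if j = 0 then p else y, 0)
  have hzp : z = p := hiso z <| by simpa using (hz 0 0 le_rfl).trans_lt hδε₀
  refine ⟨t 0, (ht 0).1, ?_⟩
  simpa [hzp] using (hz 1 0 le_rfl).trans_lt hδε

theorem exists_isPeriodicPt_of_isOpen_singleton (hf : GluingOrbit f) (hp : IsOpen {p}) :
    ∃ n, 0 < n ∧ IsPeriodicPt f n p := by
  obtain ⟨ε₀, hε₀, hiso⟩ := isOpen_singleton_iff.mp hp
  obtain ⟨n, hn, hdist⟩ := hf.exists_iterate_dist_lt_of_isOpen_singleton hp p hε₀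
  exact ⟨n, hn, hiso _ hdist⟩

theorem mem_closure_range_iterate_of_isOpen_singleton (hf : GluingOrbit f) (hp : IsOpen {p})
    (y : X) : y ∈ closure (range fun k => f^[k] p) :=
  mem_closure_range_iff.mpr fun ε hε => by
    obtain ⟨t, -, ht⟩ := hf.exists_iterate_dist_lt_of_isOpen_singleton hp y hε
    exact ⟨t, by rwa [dist_comm]⟩

end GluingOrbit

theorem stmt2_general [MetricSpace X] (f : X → X) (hf : GluingOrbit f) :
    Perfect (Set.univ : Set X) ∨
      ∃ x : X, ∃ n : ℕ, 1 ≤ n ∧ f^[n] x = x ∧ ∀ y : X, ∃ k < n, f^[k] x = y := by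
  by_cases hperf : ∀ x : X, (𝓝[≠] x).NeBot
  · exact Or.inl (perfectSpace_iff_forall_not_isolated.mpr hperf).univ_perfect
  · obtain ⟨p, hp⟩ := not_forall.mp hperf
    have hp : IsOpen {p} := (isOpen_singleton_iff_punctured_nhds p).mpr (not_neBot.mp hp)
    obtain ⟨n, hn, hper⟩ := hf.exists_isPeriodicPt_of_isOpen_singleton hp
    exact Or.inr ⟨p, n, hn, hper, fun y => hper.exists_lt_iterate_eq_of_mem_closure hn
      (hf.mem_closure_range_iterate_of_isOpen_singleton hp y)⟩

/-- If `f : X → X` has the gluing-orbit property on a compact metric space, then either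
`X` is perfect, or `X` consists of a single periodic orbit of `f`. -/
theorem stmt2 [MetricSpace X] [CompactSpace X] (f : X → X) (hf : GluingOrbit f) :
    Perfect (Set.univ : Set X) ∨
      ∃ x : X, ∃ n : ℕ, 1 ≤ n ∧ f^[n] x = x ∧ ∀ y : X, ∃ k < n, f^[k] x = y :=
  stmt2_general f hf
end

section
/- Let $X$ be a compact metric space and $f: X \to X$ a continuous map satisfying the gluing-orbit property and having positive topological entropy. Then $f$ is sensitive. -/
open Function Metric Filter

variable {X : Type*}

/-- `f` is sensitive with sensitivity constant `ε`. -/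
def SensitiveWith [MetricSpace X] (f : X → X) (ε : ℝ) : Prop :=
  ∀ x : X, ∀ δ : ℝ, 0 < δ → ∃ y : X, dist x y < δ ∧ ∃ n : ℕ, ε < dist (f^[n] x) (f^[n] y)

/-- `f` is sensitive (to initial conditions). -/
def Sensitive [MetricSpace X] (f : X → X) : Prop :=
  ∃ ε : ℝ, 0 < ε ∧ SensitiveWith f ε
/-- The maximal cardinality of an `(n,δ)`-separated subset of `X`: a set `E` is
`(n,δ)`-separated if any two distinct `x, y ∈ E` satisfy `dist (f^[i] x) (f^[i] y) > δ`
for some `0 ≤ i ≤ n`. -/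
noncomputable def sepCount [MetricSpace X] (f : X → X) (n : ℕ) (δ : ℝ) : ℕ :=
  sSup {k : ℕ | ∃ E : Finset X, E.card = k ∧
    ∀ x ∈ E, ∀ y ∈ E, x ≠ y → ∃ i ≤ n, δ < dist (f^[i] x) (f^[i] y)}

/-- `h(f,δ) = limsup_{n → ∞} (1/n) log s(n,δ)`. -/
noncomputable def entropyAt [MetricSpace X] (f : X → X) (δ : ℝ) : EReal :=
  Filter.atTop.limsup fun n : ℕ => ((Real.log (sepCount f n δ) / n : ℝ) : EReal)

/-- The topological entropy `h(f) = lim_{δ → 0} h(f,δ)`; since `h(f,δ)` increases as `δ`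
decreases to `0`, this limit equals `⨆_{δ > 0} h(f,δ)`. -/
noncomputable def topEntropy [MetricSpace X] (f : X → X) : EReal :=
  ⨆ (δ : ℝ) (_ : 0 < δ), entropyAt f δ

/-! If `f` is not sensitive with constant `η`, some point `x₀` is Lyapunov stable up to `η`.
Gluing an arbitrary orbit segment `(y, n)` after a point shadowing `x₀` shows that `(y, n)` is
followed, up to a time shift in `[1, M]`, by the orbit of `x₀`. So the `M` shifted orbits of
`x₀` are `(n, δ/2)`-spanning for every `n` once `2η < δ`, which bounds every
`(n, δ)`-separated set by `M`; hence `h(f, δ) = 0` for all `δ`. -/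

open Topology

section

variable [MetricSpace X] {f : X → X}

theorem GluingOrbit.exists_shift_tracing (hf : GluingOrbit f) {ε : ℝ} (hε : 0 < ε) :
    ∃ M : ℕ, ∀ (x y : X) (n : ℕ), ∃ t ∈ Finset.Icc 1 M, ∃ z : X,
      dist z x ≤ ε ∧ ∀ l ≤ n, dist (f^[t + l] z) (f^[l] y) ≤ ε := by
  obtain ⟨M, hM⟩ := hf ε hε
  refine ⟨M, fun x y n => ?_⟩
  obtain ⟨t, ht, z, hz⟩ := hM fun j => if j = 1 then (y, n) else (x, 0)
  refine ⟨t 0, Finset.mem_Icc.2 (ht 0), z, by simpa using hz 0 0 le_rfl, fun l hl => ?_⟩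
  simpa using hz 1 l (by simpa using hl)

theorem sepCount_le_card_of_forall_exists_shadow {ι : Type*} (T : Finset ι) (p : ι → ℕ → X)
    {n : ℕ} {r δ : ℝ} (hrδ : 2 * r < δ)
    (h : ∀ y, ∃ i ∈ T, ∀ l ≤ n, dist (f^[l] y) (p i l) ≤ r) :
    sepCount f n δ ≤ T.card := by
  choose g hgT hg using h
  refine csSup_le ⟨0, ∅, by simp⟩ ?_
  rintro k ⟨E, rfl, hE⟩
  refine Finset.card_le_card_of_injOn g (fun y _ => hgT y) fun y hy y' hy' hgy => ?_
  by_contra hne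
  obtain ⟨l, hl, hsep⟩ := hE y hy y' hy' hne
  have hy_near := hg y l hl
  rw [hgy] at hy_near
  linarith [hg y' l hl, dist_triangle_right (f^[l] y) (f^[l] y') (p (g y') l)]

theorem entropyAt_nonpos_of_sepCount_le {δ : ℝ} (M : ℕ) (hM : ∀ n, sepCount f n δ ≤ M) :
    entropyAt f δ ≤ 0 := by
  have hlog : ∀ n, Real.log (sepCount f n δ) ≤ Real.log M := fun n => by
    rcases Nat.eq_zero_or_pos (sepCount f n δ) with h | h
    · simpa [h] using Real.log_natCast_nonneg M
    · exact Real.log_le_log (by exact_mod_cast h) (by exact_mod_cast hM n)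
  have hten : Tendsto (fun n : ℕ => Real.log (sepCount f n δ) / n) atTop (𝓝 0) :=
    squeeze_zero (fun n => by have := Real.log_natCast_nonneg (sepCount f n δ); positivity)
      (fun n => div_le_div_of_nonneg_right (hlog n) n.cast_nonneg)
      (tendsto_const_div_atTop_nhds_zero_nat (Real.log M))
  rw [entropyAt, (EReal.tendsto_coe.2 hten).limsup_eq, EReal.coe_zero]

theorem GluingOrbit.exists_sepCount_le_of_not_sensitiveWith (hf : GluingOrbit f) {η δ : ℝ}
    (hη : ¬ SensitiveWith f η) (hηδ : 2 * η < δ) : ∃ M : ℕ, ∀ n, sepCount f n δ ≤ M := by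
  obtain ⟨x₀, δ₀, hδ₀, hstable⟩ : ∃ x₀ : X, ∃ δ₀ > 0, ∀ y, dist x₀ y < δ₀ →
      ∀ k, dist (f^[k] x₀) (f^[k] y) ≤ η := by
    simpa [SensitiveWith] using hη
  obtain ⟨ε, hε, hεmin⟩ := exists_between (lt_min (by linarith : 0 < δ / 2 - η) hδ₀)
  obtain ⟨hεη, hεδ₀⟩ := lt_min_iff.1 hεmin
  obtain ⟨M, hM⟩ := hf.exists_shift_tracing hε
  refine ⟨M, fun n => ?_⟩
  have hεδ : 2 * (ε + η) < δ := by linarith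
  refine (sepCount_le_card_of_forall_exists_shadow (Finset.Icc 1 M)
    (fun t l => f^[t + l] x₀) hεδ fun y => ?_).trans (by simp)
  obtain ⟨t, ht, z, hzx₀, hzy⟩ := hM x₀ y n
  have hz : dist x₀ z < δ₀ := by rw [dist_comm]; linarith
  refine ⟨t, ht, fun l hl => ?_⟩
  calc dist (f^[l] y) (f^[t + l] x₀)
      ≤ dist (f^[t + l] z) (f^[l] y) + dist (f^[t + l] z) (f^[t + l] x₀) :=
        dist_triangle_left _ _ _
    _ ≤ ε + η := add_le_add (hzy l hl) ((dist_comm _ _).trans_le (hstable z hz _))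

end

theorem stmt5_general [MetricSpace X] (f : X → X)
    (hf : GluingOrbit f) (hent : 0 < topEntropy f) :
    Sensitive f := by
  by_contra hsens
  refine hent.not_ge (iSup₂_le fun δ hδ => ?_)
  have hη : ¬ SensitiveWith f (δ / 4) := fun h => hsens ⟨δ / 4, by positivity, h⟩
  obtain ⟨M, hM⟩ :=
    hf.exists_sepCount_le_of_not_sensitiveWith hη (by linarith : 2 * (δ / 4) < δ)
  exact entropyAt_nonpos_of_sepCount_le M hM

/-- A continuous map of a compact metric space with the gluing-orbit property and positive
topological entropy is sensitive. -/
theorem stmt5 [MetricSpace X] [CompactSpace X] (f : X → X) (hc : Continuous f)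
    (hf : GluingOrbit f) (hent : 0 < topEntropy f) :
    Sensitive f :=
  stmt5_general f hf hent
end

section
/- Let $X$ be a compact metric space and $f: X \to X$ a continuous map satisfying the gluing-orbit property. Then either $f$ is both minimal and equicontinuous, or $f$ is sensitive. -/
/-!
If `f` is not sensitive, then for every `ε > 0` some point `x` is `ε`-stable: all orbits
starting near `x` stay `ε`-close to the orbit of `x`. Gluing the orbit of a point near `x` to an
orbit segment of any `u` shows that the orbit of `x` itself shadows every orbit segment after a
bounded delay. Using this twice, the orbit of any `u` comes close to any `v`, so `f` is
minimal. By minimality every orbit enters the stable neighbourhood of `x`, which together with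
continuity of finitely many iterates gives equicontinuity at every point, and compactness makes
it uniform.
-/

open Function Metric Filter

variable {X : Type*}

/-- `f` is minimal: every forward orbit is dense. -/
def MinimalMap [TopologicalSpace X] (f : X → X) : Prop :=
  ∀ x : X, Dense (Set.range fun n : ℕ => f^[n] x)

/-- `f` is equicontinuous: the family of iterates of `f` is equicontinuous. -/
def EquicontinuousMap [MetricSpace X] (f : X → X) : Prop :=
  ∀ ε : ℝ, 0 < ε → ∃ δ : ℝ, 0 < δ ∧
    ∀ x y : X, dist x y < δ → ∀ n : ℕ, dist (f^[n] x) (f^[n] y) ≤ ε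

open Topology

section

variable [MetricSpace X] {f : X → X}

def StableWith (f : X → X) (ε : ℝ) (x : X) : Prop :=
  ∀ᶠ y in 𝓝 x, ∀ n, dist (f^[n] x) (f^[n] y) ≤ ε

theorem exists_stableWith_of_not_sensitiveWith {ε : ℝ} (h : ¬SensitiveWith f ε) :
    ∃ x, StableWith f ε x := by
  simp only [SensitiveWith, not_forall, not_exists, not_and, not_lt] at h
  obtain ⟨x, δ, hδ, hx⟩ := h
  exact ⟨x, eventually_nhds_iff_ball.2 ⟨δ, hδ, fun y hy => hx y (mem_ball'.1 hy)⟩⟩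

theorem StableWith.exists_shadow (hf : GluingOrbit f) {ε η : ℝ} {x : X}
    (hx : StableWith f ε x) (hη : 0 < η) :
    ∃ M : ℕ, ∀ (u : X) (L m : ℕ), ∃ T, m < T ∧ T ≤ m + M ∧
      ∀ l ≤ L, dist (f^[T + l] x) (f^[l] u) ≤ ε + η := by
  obtain ⟨δ, hδ, hball⟩ := eventually_nhds_iff_ball.1 hx
  obtain ⟨M, hM⟩ := hf (min (δ / 2) η) (by positivity)
  refine ⟨M, fun u L m => ?_⟩
  -- glue a segment of the orbit of `x` of length `m` to one of the orbit of `u` of length `L`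
  obtain ⟨t, ht, z, hz⟩ := hM fun j => if j = 0 then (x, m) else (u, L)
  have hzx : z ∈ ball x δ := by
    have hz0 : dist z x ≤ min (δ / 2) η := by simpa using hz 0 0 (Nat.zero_le _)
    rw [mem_ball]
    linarith [min_le_left (δ / 2) η]
  refine ⟨m + t 0, by linarith [(ht 0).1], by linarith [(ht 0).2], fun l hl => ?_⟩
  have hzu : dist (f^[m + t 0 + l] z) (f^[l] u) ≤ min (δ / 2) η := by simpa using hz 1 l hl
  calc dist (f^[m + t 0 + l] x) (f^[l] u)
      ≤ dist (f^[m + t 0 + l] x) (f^[m + t 0 + l] z) + dist (f^[m + t 0 + l] z) (f^[l] u) :=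
        dist_triangle _ _ _
    _ ≤ ε + η := add_le_add (hball z hzx _) (hzu.trans (min_le_right _ _))

theorem GluingOrbit.minimalMap (hf : GluingOrbit f)
    (hstable : ∀ ε > 0, ∃ x, StableWith f ε x) : MinimalMap f := by
  intro u
  refine denseRange_iff.2 fun v r hr => ?_
  obtain ⟨x, hx⟩ := hstable (r / 8) (by positivity)
  obtain ⟨M, hM⟩ := hx.exists_shadow hf (η := r / 8) (by positivity)
  -- `x` visits `v` at a time `s > M` and shadows the orbit of `u` from a time `T ≤ M`
  obtain ⟨s, hMs, -, hvisit⟩ := hM v 0 M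
  obtain ⟨T, -, hTM, hxu⟩ := hM u s 0
  have hxv : dist (f^[s] x) v ≤ r / 8 + r / 8 := by simpa using hvisit 0 le_rfl
  have hxu := hxu (s - T) (Nat.sub_le _ _)
  rw [Nat.add_sub_cancel' (by omega)] at hxu
  refine ⟨s - T, ?_⟩
  calc dist v (f^[s - T] u) ≤ dist v (f^[s] x) + dist (f^[s] x) (f^[s - T] u) :=
        dist_triangle _ _ _
    _ ≤ (r / 8 + r / 8) + (r / 8 + r / 8) := add_le_add (by rwa [dist_comm]) hxu
    _ < r := by linarith

theorem equicontinuousAt_iterate_of_minimalMap (hc : Continuous f) (hmin : MinimalMap f)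
    (hstable : ∀ ε > 0, ∃ x, StableWith f ε x) (u : X) :
    EquicontinuousAt (fun n => f^[n]) u := by
  rw [equicontinuousAt_iff_right]
  intro ε hε
  obtain ⟨x, hx⟩ := hstable (ε / 3) (by positivity)
  obtain ⟨U, hUx, hU, hxU⟩ := _root_.eventually_nhds_iff.1 hx
  obtain ⟨_, ⟨n, rfl⟩, hnU⟩ := (hmin u).exists_mem_open hU ⟨x, hxU⟩
  have hearly : ∀ᶠ u' in 𝓝 u, ∀ k ∈ Finset.range n, dist (f^[k] u) (f^[k] u') < ε :=
    (eventually_all_finset _).2 fun k _ =>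
      ((hc.iterate k).continuousAt.eventually_mem (ball_mem_nhds _ hε)).mono fun _ => mem_ball'.1
  have hlate : ∀ᶠ u' in 𝓝 u, f^[n] u' ∈ U :=
    (hc.iterate n).continuousAt.preimage_mem_nhds (hU.mem_nhds hnU)
  filter_upwards [hearly, hlate] with u' hk hu'U k
  rcases lt_or_ge k n with hkn | hkn
  · exact hk k (Finset.mem_range.2 hkn)
  · obtain ⟨j, rfl⟩ := Nat.exists_eq_add_of_le' hkn
    rw [iterate_add_apply, iterate_add_apply]
    calc dist (f^[j] (f^[n] u)) (f^[j] (f^[n] u'))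
        ≤ dist (f^[j] (f^[n] u)) (f^[j] x) + dist (f^[j] x) (f^[j] (f^[n] u')) :=
          dist_triangle _ _ _
      _ ≤ ε / 3 + ε / 3 := add_le_add (by rw [dist_comm]; exact hUx _ hnU j) (hUx _ hu'U j)
      _ < ε := by linarith

theorem equicontinuousMap_of_equicontinuous [CompactSpace X]
    (h : Equicontinuous fun n => f^[n]) : EquicontinuousMap f := by
  intro ε hε
  obtain ⟨δ, hδ, hδε⟩ := uniformEquicontinuous_iff.1
    (CompactSpace.uniformEquicontinuous_of_equicontinuous h) ε hε
  exact ⟨δ, hδ, fun x y hxy n => (hδε x y hxy n).le⟩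

end

/-- Auslander–Yorke type dichotomy: a continuous map of a compact metric space with the
gluing-orbit property is either minimal and equicontinuous, or sensitive. -/
theorem stmt6 [MetricSpace X] [CompactSpace X] (f : X → X) (hc : Continuous f)
    (hf : GluingOrbit f) :
    (MinimalMap f ∧ EquicontinuousMap f) ∨ Sensitive f := by
  by_cases hs : Sensitive f
  · exact .inr hs
  have hstable : ∀ ε > 0, ∃ x, StableWith f ε x := fun ε hε =>
    exists_stableWith_of_not_sensitiveWith fun h => hs ⟨ε, hε, h⟩
  have hmin := hf.minimalMap hstable
  exact .inl ⟨hmin, equicontinuousMap_of_equicontinuous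
    (equicontinuousAt_iterate_of_minimalMap hc hmin hstable)⟩
end

section
/- Let $X$ be a compact metric space, $f: X \to X$ a homeomorphism, and let $2^f: 2^X \to 2^X$ be the induced map on the hyperspace of nonempty compact subsets of $X$ equipped with the Hausdorff metric, defined by $2^f(A) = f(A)$. If $2^f$ has the gluing-orbit property, then $f$ has the gluing-orbit property. -/
/-! Embed `X` into its hyperspace by `x ↦ {x}`. The orbit of `{x}` under `2^f` is the orbit of
`x` under `f`, so tracing the orbit sequence of singletons `({x_j}, m_j)` by a compact set `Z`
means that every point `z ∈ Z` traces `(x_j, m_j)`: the distance from a point of a set to a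
singleton is bounded by the Hausdorff distance between the set and the singleton. -/

open Function Metric Filter

variable {X : Type*}

open TopologicalSpace in
/-- The induced map `2^f` on the hyperspace of nonempty compact subsets of `X`
(with the Hausdorff metric), `2^f (A) = f(A)`. -/
noncomputable def hyperMap [MetricSpace X] (f : X ≃ₜ X) :
    NonemptyCompacts X → NonemptyCompacts X :=
  fun A => ⟨⟨f '' A, A.isCompact.image f.continuous⟩, A.nonempty.image f⟩

section

open TopologicalSpace

variable [MetricSpace X]

theorem coe_hyperMap_iterate (f : X ≃ₜ X) (n : ℕ) (A : NonemptyCompacts X) :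
    ((hyperMap f)^[n] A : Set X) = (⇑f)^[n] '' A := by
  induction n with
  | zero => simp
  | succ n ih =>
    rw [iterate_succ_apply', iterate_succ', Set.image_comp, ← ih]
    rfl

theorem hyperMap_iterate_singleton (f : X ≃ₜ X) (n : ℕ) (x : X) :
    (hyperMap f)^[n] {x} = {(⇑f)^[n] x} := by
  ext1
  simp only [coe_hyperMap_iterate, NonemptyCompacts.coe_singleton, Set.image_singleton]

theorem TopologicalSpace.NonemptyCompacts.dist_le_dist_singleton_of_mem {A : NonemptyCompacts X} {x : X}
    (hx : x ∈ A) (y : X) : dist x y ≤ dist A {y} := by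
  rw [NonemptyCompacts.dist_eq, ← infDist_singleton]
  exact infDist_le_hausdorffDist_of_mem hx
    (hausdorffEDist_ne_top_of_nonempty_of_bounded A.nonempty (Set.singleton_nonempty y)
      A.isCompact.isBounded Bornology.isBounded_singleton)

theorem TracedBy.of_hyperMap_singleton {f : X ≃ₜ X} {c : ℕ → X × ℕ} {t : ℕ → ℕ} {ε : ℝ}
    {Z : NonemptyCompacts X} (hZ : TracedBy (hyperMap f) (fun j => ({(c j).1}, (c j).2)) t ε Z)
    {z : X} (hz : z ∈ Z) : TracedBy f c t ε z := by
  intro j l hl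
  have hmem : (⇑f)^[(∑ i ∈ Finset.range j, ((c i).2 + t i)) + l] z ∈
      (hyperMap f)^[(∑ i ∈ Finset.range j, ((c i).2 + t i)) + l] Z := by
    rw [← SetLike.mem_coe, coe_hyperMap_iterate]
    exact Set.mem_image_of_mem _ hz
  calc _ ≤ dist ((hyperMap f)^[(∑ i ∈ Finset.range j, ((c i).2 + t i)) + l] Z)
          {(⇑f)^[l] (c j).1} := NonemptyCompacts.dist_le_dist_singleton_of_mem hmem _
    _ ≤ ε := by simpa only [hyperMap_iterate_singleton] using hZ j l hl

end

theorem stmt8_general [MetricSpace X] (f : X ≃ₜ X)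
    (hf : GluingOrbit (hyperMap f)) :
    GluingOrbit (f : X → X) := by
  intro ε hε
  obtain ⟨M, hM⟩ := hf ε hε
  refine ⟨M, fun c => ?_⟩
  obtain ⟨t, ht, Z, hZ⟩ := hM fun j => ({(c j).1}, (c j).2)
  obtain ⟨z, hz⟩ := Z.nonempty
  exact ⟨t, ht, z, hZ.of_hyperMap_singleton hz⟩

/-- If the induced map `2^f` on the hyperspace of nonempty compact subsets (with the
Hausdorff metric) has the gluing-orbit property, then `f` has the gluing-orbit property. -/
theorem stmt8 [MetricSpace X] [CompactSpace X] (f : X ≃ₜ X)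
    (hf : GluingOrbit (hyperMap f)) :
    GluingOrbit (f : X → X) :=
  stmt8_general f hf
end

section
/- Let $X$ be a compact metric space, $f: X \to X$ a homeomorphism, and let $2^f: 2^X \to 2^X$ be the induced map on the hyperspace of nonempty compact subsets of $X$ equipped with the Hausdorff metric, defined by $2^f(A) = f(A)$. If $2^f$ has the gluing-orbit property, then $f$ is topologically mixing: for all nonempty open subsets $U, V \subseteq X$ there exists $n \in \mathbb{N}$ such that $f^k(U) \cap V \neq \emptyset$ for every $k \ge n$. -/
/-!
Take `x ∈ U`, `y ∈ V`, a radius `r` of balls around them inside `U` and `V`, and the gap bound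
`M` of `2^f` for `r / 2`. For `k ≥ M`, glue the one-point orbit of `{x}` to the orbit of length
`k` of the finite set `S = {f⁻ⁱ y : i ≤ k}`. The tracing set `Z` lies in `ball x r`, and after
the gap `t ≤ M` it follows the orbit of `S`; at time `k` it is therefore Hausdorff-close to
`f^(k - t)(S)`, which contains `y` whatever `t` is. Hence `f^k(z) ∈ ball y r` for some `z ∈ Z`.
-/

open Function Metric Filter

variable {X : Type*}

/-- `f` is topologically mixing. -/
def TopMixing [TopologicalSpace X] (f : X → X) : Prop :=
  ∀ U V : Set X, IsOpen U → IsOpen V → U.Nonempty → V.Nonempty →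
    ∃ n : ℕ, ∀ k, n ≤ k → (f^[k] '' U ∩ V).Nonempty

open TopologicalSpace

theorem TopologicalSpace.NonemptyCompacts.exists_dist_lt_of_dist_lt [MetricSpace X]
    {A B : NonemptyCompacts X} {r : ℝ} {a : X} (ha : a ∈ A) (h : dist A B < r) :
    ∃ b ∈ B, dist a b < r :=
  exists_dist_lt_of_hausdorffDist_lt ha h (edist_ne_top A B)

theorem TopologicalSpace.NonemptyCompacts.exists_dist_lt_of_dist_lt' [MetricSpace X]
    {A B : NonemptyCompacts X} {r : ℝ} {b : X} (hb : b ∈ B) (h : dist A B < r) :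
    ∃ a ∈ A, dist a b < r :=
  exists_dist_lt_of_hausdorffDist_lt' hb h (edist_ne_top A B)

theorem GluingOrbit.exists_trace_two_segments [MetricSpace X] {g : X → X} (hg : GluingOrbit g)
    {ε : ℝ} (hε : 0 < ε) : ∃ M : ℕ, ∀ (a b : X) (n : ℕ), ∃ t ∈ Finset.Icc 1 M, ∃ z : X,
      dist z a ≤ ε ∧ ∀ l ≤ n, dist (g^[t + l] z) (g^[l] b) ≤ ε := by
  obtain ⟨M, hM⟩ := hg ε hε
  refine ⟨M, fun a b n => ?_⟩
  obtain ⟨t, ht, z, hz⟩ := hM fun j => if j = 1 then (b, n) else (a, 0)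
  refine ⟨t 0, Finset.mem_Icc.2 (ht 0), z, by simpa using hz 0 0 le_rfl, fun l hl => ?_⟩
  simpa using hz 1 l (by simpa using hl)

theorem hyperMap_iterate_coe [MetricSpace X] (f : X ≃ₜ X) (n : ℕ) (A : NonemptyCompacts X) :
    ((hyperMap f)^[n] A : Set X) = f^[n] '' A := by
  induction n with
  | zero => simp
  | succ n ih =>
    rw [iterate_succ_apply', iterate_succ', Set.image_comp, ← ih]
    rfl

def backwardOrbitSegment [TopologicalSpace X] (f : X ≃ₜ X) (y : X) (n : ℕ) :
    NonemptyCompacts X :=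
  ⟨⟨(fun i => f.symm^[i] y) '' Set.Iic n, ((Set.finite_Iic n).image _).isCompact⟩,
    ⟨y, 0, Set.mem_Iic.2 (Nat.zero_le n), rfl⟩⟩

theorem mem_image_iterate_backwardOrbitSegment [TopologicalSpace X] (f : X ≃ₜ X) (y : X)
    {l n : ℕ} (hl : l ≤ n) : y ∈ f^[l] '' backwardOrbitSegment f y n :=
  ⟨f.symm^[l] y, ⟨l, hl, rfl⟩, LeftInverse.iterate f.apply_symm_apply l y⟩

theorem stmt9_general [MetricSpace X] (f : X ≃ₜ X)
    (hf : GluingOrbit (hyperMap f)) :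
    TopMixing (f : X → X) := by
  rintro U V hU hV ⟨x, hx⟩ ⟨y, hy⟩
  obtain ⟨r, hr, hxU, hyV⟩ : ∃ r > 0, ball x r ⊆ U ∧ ball y r ⊆ V := by
    obtain ⟨r₁, hr₁, hU₁⟩ := isOpen_iff.1 hU x hx
    obtain ⟨r₂, hr₂, hV₂⟩ := isOpen_iff.1 hV y hy
    exact ⟨min r₁ r₂, lt_min hr₁ hr₂, (ball_subset_ball (min_le_left _ _)).trans hU₁,
      (ball_subset_ball (min_le_right _ _)).trans hV₂⟩
  obtain ⟨M, hM⟩ := hf.exists_trace_two_segments (half_pos hr)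
  refine ⟨M, fun k hk => ?_⟩
  obtain ⟨t, ht, Z, hZx, hZy⟩ := hM {x} (backwardOrbitSegment f y k) k
  have htk : t ≤ k := (Finset.mem_Icc.1 ht).2.trans hk
  have hfar := hZy (k - t) (Nat.sub_le k t)
  rw [Nat.add_sub_cancel' htk] at hfar
  have hyS : y ∈ (hyperMap f)^[k - t] (backwardOrbitSegment f y k) := by
    rw [← SetLike.mem_coe, hyperMap_iterate_coe]
    exact mem_image_iterate_backwardOrbitSegment f y (Nat.sub_le k t)
  obtain ⟨_, hzZ, hzy⟩ :=
    NonemptyCompacts.exists_dist_lt_of_dist_lt' hyS (hfar.trans_lt (half_lt_self hr))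
  rw [← SetLike.mem_coe, hyperMap_iterate_coe] at hzZ
  obtain ⟨z, hz, rfl⟩ := hzZ
  obtain ⟨_, rfl, hzx⟩ := NonemptyCompacts.exists_dist_lt_of_dist_lt hz
    (hZx.trans_lt (half_lt_self hr))
  exact ⟨f^[k] z, ⟨z, hxU hzx, rfl⟩, hyV hzy⟩

/-- If the induced map `2^f` on the hyperspace of nonempty compact subsets (with the
Hausdorff metric) has the gluing-orbit property, then `f` is topologically mixing. -/
theorem stmt9 [MetricSpace X] [CompactSpace X] (f : X ≃ₜ X)
    (hf : GluingOrbit (hyperMap f)) :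
    TopMixing (f : X → X) :=
  stmt9_general f hf
end

section
/- Let $X$ be a compact metric space and $f: X \to X$ a homeomorphism satisfying the shadowing property. If $f$ is sensitive with sensitivity constant $\varepsilon > 0$, then for each $x \in X$ there is a nonempty compact perfect set $C_x \subseteq W^u_\varepsilon(x)$. -/
/-!
By compactness, sensitivity is uniform: for `δ > 0` there are a length `L` and, for each `z`,
a point `Q z` that is `δ`-close to `z` and whose orbit is `ε`-apart from that of `z` at some time
`N z < L`. For every `s ⊆ ℕ`, concatenate orbit blocks of length `L`, the `k`-th block starting
at the current point or at its `Q`-image according to whether `k ∈ s`, and precede them by the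
backward orbit of `x`. This `δ`-pseudo-orbit is `ε/4`-shadowed by a point `φ s` of `W^u_ε(x)`,
and the pseudo-orbits of distinct `s` are `ε`-apart at some time, so `φ` is injective. Hence the
closed set `W^u_ε(x)` is uncountable, and by Cantor–Bendixson it contains a nonempty perfect set.
-/

open Function Metric Filter

variable {X : Type*}

/-- The `n`-th iterate (`n ∈ ℤ`) of a homeomorphism `f`. -/
def zIter [TopologicalSpace X] (f : X ≃ₜ X) (n : ℤ) : X → X := fun x => (f.toEquiv ^ n) x

/-- `f` has the shadowing property: every `δ`-pseudo-orbit (indexed by `ℤ`) is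
`ε`-shadowed by a true orbit. -/
def Shadowing [MetricSpace X] (f : X ≃ₜ X) : Prop :=
  ∀ ε : ℝ, 0 < ε → ∃ δ : ℝ, 0 < δ ∧ ∀ x : ℤ → X,
    (∀ n : ℤ, dist (f (x n)) (x (n + 1)) < δ) →
    ∃ y : X, ∀ n : ℤ, dist (zIter f n y) (x n) < ε

open scoped Topology

section zIter

variable [TopologicalSpace X] (f : X ≃ₜ X)

lemma zIter_zero (y : X) : zIter f 0 y = y := by
  show (f.toEquiv ^ (0 : ℤ)) y = y
  rw [zpow_zero]
  rfl

lemma apply_zIter (n : ℤ) (y : X) : f (zIter f n y) = zIter f (n + 1) y := by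
  show f ((f.toEquiv ^ n) y) = (f.toEquiv ^ (n + 1)) y
  rw [add_comm, zpow_one_add, Equiv.Perm.mul_apply]
  rfl

lemma zIter_neg_natCast (k : ℕ) (y : X) : zIter f (-(k : ℤ)) y = (f.symm : X → X)^[k] y := by
  show (f.toEquiv ^ (-(k : ℤ))) y = _
  rw [zpow_neg, zpow_natCast, ← inv_pow, ← Equiv.Perm.iterate_eq_pow]
  rfl

end zIter

theorem SensitiveWith.exists_uniform_bound [MetricSpace X] [CompactSpace X] {f : X → X}
    (hf : Continuous f) {ε : ℝ} (hsens : SensitiveWith f ε) {δ : ℝ} (hδ : 0 < δ) :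
    ∃ L : ℕ, ∀ z, ∃ q, dist z q < δ ∧ ∃ n < L, ε < dist (f^[n] z) (f^[n] q) := by
  choose q hq n hn using fun z => hsens z δ hδ
  have hU : ∀ z, {w | dist w (q z) < δ ∧ ε < dist (f^[n z] w) (f^[n z] (q z))} ∈ 𝓝 z :=
    fun z => IsOpen.mem_nhds
      ((isOpen_lt (continuous_id.dist continuous_const) continuous_const).inter
        (isOpen_lt continuous_const ((hf.iterate _).dist continuous_const)))
      ⟨hq z, hn z⟩
  obtain ⟨t, ht⟩ := finite_cover_nhds hU
  refine ⟨t.sup n + 1, fun w => ?_⟩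
  obtain ⟨z, hz, hwz⟩ := Set.mem_iUnion₂.1 (ht ▸ Set.mem_univ w)
  exact ⟨q z, hwz.1, n z, Nat.lt_succ_of_le (Finset.le_sup hz), hwz.2⟩

section BlockOrbit

variable (g Q : X → X) (L : ℕ) (x : X) (s : Set ℕ)

open Classical in
noncomputable def blockBase : ℕ → X
  | 0 => x
  | k + 1 => g^[L] (if k ∈ s then Q (blockBase k) else blockBase k)

open Classical in
noncomputable def blockStart (k : ℕ) : X :=
  if k ∈ s then Q (blockBase g Q L x s k) else blockBase g Q L x s k

noncomputable def blockOrbit (m : ℕ) : X := g^[m % L] (blockStart g Q L x s (m / L))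

lemma blockBase_succ (k : ℕ) :
    blockBase g Q L x s (k + 1) = g^[L] (blockStart g Q L x s k) := rfl

lemma blockOrbit_zero : blockOrbit g Q L x s 0 = blockStart g Q L x s 0 := by
  simp [blockOrbit]

variable {g Q L x s} in
lemma blockOrbit_mul_add {k j : ℕ} (hj : j < L) :
    blockOrbit g Q L x s (L * k + j) = g^[j] (blockStart g Q L x s k) := by
  simp only [blockOrbit, Nat.mul_add_mod, Nat.mul_add_div (by omega : 0 < L),
    Nat.mod_eq_of_lt hj, Nat.div_eq_of_lt hj, add_zero]

lemma blockBase_congr {s t : Set ℕ} {k : ℕ} (h : ∀ i < k, (i ∈ s ↔ i ∈ t)) :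
    blockBase g Q L x s k = blockBase g Q L x t k := by
  classical
  induction k with
  | zero => rfl
  | succ k ih =>
    rw [blockBase_succ, blockBase_succ, blockStart, blockStart, ih fun i hi => h i (by omega),
      if_congr (h k k.lt_succ_self) rfl rfl]

variable [MetricSpace X] {δ : ℝ}

variable {g Q L x s} in
lemma dist_blockBase_blockStart_lt (hδ : 0 < δ) (hQ : ∀ z, dist z (Q z) < δ) (k : ℕ) :
    dist (blockBase g Q L x s k) (blockStart g Q L x s k) < δ := by
  unfold blockStart
  split_ifs
  · exact hQ _
  · simpa using hδ

variable {g Q L x s} in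
lemma dist_apply_blockOrbit_lt (hδ : 0 < δ) (hQ : ∀ z, dist z (Q z) < δ) (hL : 0 < L)
    (m : ℕ) : dist (g (blockOrbit g Q L x s m)) (blockOrbit g Q L x s (m + 1)) < δ := by
  obtain ⟨k, j, hj, rfl⟩ : ∃ k j, j < L ∧ m = L * k + j :=
    ⟨m / L, m % L, Nat.mod_lt m hL, (Nat.div_add_mod m L).symm⟩
  rw [blockOrbit_mul_add hj, ← iterate_succ_apply' g]
  rcases (Nat.succ_le_of_lt hj).lt_or_eq with hj' | hj'
  · rw [add_assoc, blockOrbit_mul_add hj', dist_self]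
    exact hδ
  · have hm : L * k + j + 1 = L * (k + 1) + 0 := by rw [← hj', Nat.succ_eq_add_one]; ring
    rw [hm, blockOrbit_mul_add hL, hj', ← blockBase_succ]
    exact dist_blockBase_blockStart_lt hδ hQ _

variable {g Q L} in
lemma exists_lt_dist_blockOrbit {ε : ℝ} {N : X → ℕ} (hN : ∀ z, N z < L)
    (hsep : ∀ z, ε < dist (g^[N z] z) (g^[N z] (Q z))) {s t : Set ℕ} (hst : s ≠ t) :
    ∃ m, ε < dist (blockOrbit g Q L x s m) (blockOrbit g Q L x t m) := by
  classical
  have hex : ∃ k, ¬(k ∈ s ↔ k ∈ t) := by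
    by_contra! h
    exact hst (Set.ext h)
  set k := Nat.find hex
  have hbase : blockBase g Q L x s k = blockBase g Q L x t k :=
    blockBase_congr g Q L x fun i hi => not_not.1 (Nat.find_min hex hi)
  refine ⟨L * k + N (blockBase g Q L x s k), ?_⟩
  rw [blockOrbit_mul_add (hN _), blockOrbit_mul_add (hN _), blockStart, blockStart, ← hbase]
  have hk : ¬(k ∈ s ↔ k ∈ t) := Nat.find_spec hex
  by_cases hs : k ∈ s
  · rw [if_pos hs, if_neg (by tauto), dist_comm]
    exact hsep _
  · rw [if_neg hs, if_pos (by tauto)]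
    exact hsep _

end BlockOrbit

section BackwardOrbit

variable [MetricSpace X] (f : X ≃ₜ X) (x : X) (u : ℕ → X)

def prependBackwardOrbit (n : ℤ) : X := if n < 0 then zIter f n x else u n.toNat

lemma prependBackwardOrbit_natCast (m : ℕ) : prependBackwardOrbit f x u m = u m := by
  simp [prependBackwardOrbit]

lemma prependBackwardOrbit_of_neg {n : ℤ} (hn : n < 0) :
    prependBackwardOrbit f x u n = zIter f n x := if_pos hn

variable {f x u}

lemma dist_apply_prependBackwardOrbit_lt {δ : ℝ} (hδ : 0 < δ) (h0 : dist x (u 0) < δ)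
    (hu : ∀ m, dist (f (u m)) (u (m + 1)) < δ) (n : ℤ) :
    dist (f (prependBackwardOrbit f x u n)) (prependBackwardOrbit f x u (n + 1)) < δ := by
  rcases lt_trichotomy n (-1) with hn | rfl | hn
  · rw [prependBackwardOrbit_of_neg f x u (by omega), prependBackwardOrbit_of_neg f x u (by omega),
      apply_zIter, dist_self]
    exact hδ
  · rw [prependBackwardOrbit_of_neg f x u (by omega), apply_zIter, neg_add_cancel, zIter_zero]
    exact prependBackwardOrbit_natCast f x u 0 ▸ h0
  · obtain ⟨m, rfl⟩ := Int.eq_ofNat_of_zero_le (by omega : 0 ≤ n)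
    rw [← Nat.cast_succ, prependBackwardOrbit_natCast, prependBackwardOrbit_natCast]
    exact hu m

lemma mem_Wu_of_forall_dist_prependBackwardOrbit_le {y : X} {a b c : ℝ}
    (hy : ∀ n, dist (zIter f n y) (prependBackwardOrbit f x u n) ≤ a) (h0 : dist (u 0) x ≤ b)
    (hc : a + b ≤ c) : y ∈ Wu f c x := by
  intro k
  rw [← zIter_neg_natCast, ← zIter_neg_natCast]
  rcases k with _ | k
  · have hy0 := hy 0
    rw [zIter_zero, ← Nat.cast_zero, prependBackwardOrbit_natCast] at hy0
    rw [Nat.cast_zero, neg_zero, zIter_zero, zIter_zero]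
    linarith [dist_triangle y (u 0) x]
  · rw [← prependBackwardOrbit_of_neg f x u (by omega)]
    linarith [hy (-(k + 1 : ℕ)), dist_nonneg (x := u 0) (y := x)]

end BackwardOrbit

lemma isClosed_Wu [MetricSpace X] (f : X ≃ₜ X) (ε : ℝ) (x : X) : IsClosed (Wu f ε x) := by
  simp only [Wu, Set.ofPred_forall]
  exact isClosed_iInter fun k =>
    isClosed_le ((f.symm.continuous.iterate k).dist continuous_const) continuous_const

lemma IsClosed.exists_perfect_nonempty_of_injective {α : Type*} [TopologicalSpace α]
    [SecondCountableTopology α] {C : Set α} (hC : IsClosed C) {φ : Set ℕ → α}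
    (hφ : Injective φ) (hmem : ∀ s, φ s ∈ C) :
    ∃ D, Perfect D ∧ D.Nonempty ∧ D ⊆ C := by
  refine exists_perfect_nonempty_of_isClosed_of_not_countable hC fun hcount => ?_
  have : Countable (Set ℕ) := Set.countable_univ_iff.1
    ((Set.mapsTo_univ_iff.2 hmem).countable_of_injOn hφ.injOn hcount)
  obtain ⟨g, hg⟩ := Countable.exists_injective_nat (Set ℕ)
  exact cantor_injective g hg

/-- If a homeomorphism of a compact metric space has the shadowing property and is
sensitive with sensitivity constant `ε > 0`, then each local unstable set `W^u_ε(x)`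
contains a nonempty compact perfect set. -/
theorem stmt13 [MetricSpace X] [CompactSpace X] (f : X ≃ₜ X) (hsh : Shadowing f)
    (ε : ℝ) (hε : 0 < ε) (hsens : SensitiveWith (f : X → X) ε) :
    ∀ x : X, ∃ C : Set X, C.Nonempty ∧ IsCompact C ∧ Perfect C ∧ C ⊆ Wu f ε x := by
  intro x
  obtain ⟨δ, hδ, hshadow⟩ := hsh (ε / 4) (by positivity)
  have hδ' : 0 < min δ (ε / 2) := lt_min hδ (half_pos hε)
  obtain ⟨L, hL⟩ := hsens.exists_uniform_bound f.continuous hδ'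
  choose Q hQ N hNL hsep using hL
  have hL : 0 < L := (hNL x).trans_le' (Nat.zero_le _)
  have hu0 : ∀ s, dist x (blockOrbit f Q L x s 0) < min δ (ε / 2) := fun s =>
    blockOrbit_zero f Q L x s ▸ dist_blockBase_blockStart_lt hδ' hQ 0
  choose φ hφ using fun s => hshadow _ <| dist_apply_prependBackwardOrbit_lt hδ
    ((hu0 s).trans_le (min_le_left _ _))
    fun m => (dist_apply_blockOrbit_lt hδ' hQ hL m).trans_le (min_le_left _ _)
  have hmem : ∀ s, φ s ∈ Wu f ε x := fun s =>
    mem_Wu_of_forall_dist_prependBackwardOrbit_le (fun n => (hφ s n).le)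
      (dist_comm x _ ▸ ((hu0 s).trans_le (min_le_right _ _)).le) (by linarith)
  have hinj : Injective φ := by
    intro s t hst
    by_contra hne
    obtain ⟨m, hm⟩ := exists_lt_dist_blockOrbit x hNL hsep hne
    have hs := hφ s m
    have ht := hφ t m
    rw [prependBackwardOrbit_natCast, hst] at hs
    rw [prependBackwardOrbit_natCast] at ht
    linarith [dist_triangle_left (blockOrbit f Q L x s m) (blockOrbit f Q L x t m)
      (zIter f m (φ t))]
  obtain ⟨C, hperf, hne, hsub⟩ :=
    (isClosed_Wu f ε x).exists_perfect_nonempty_of_injective hinj hmem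
  exact ⟨C, hne, hperf.closed.isCompact, hperf, hsub⟩
end

section
/- Let $X$ be a compact metric space and $f: X \to X$ a homeomorphism satisfying the shadowing property. If $f^{-1}$ is sensitive with sensitivity constant $\varepsilon > 0$, then for each $x \in X$ there is a nonempty compact perfect set $C_x \subseteq W^s_\varepsilon(x)$. -/
open Function Metric Filter

variable {X : Type*}

/-! The backward half of the orbit of `x` is replaced by a pseudo-orbit that, at a sequence of
branch points `p`, may jump to a `δ`-close point `Q p` whose backward orbit separates from that
of `p` by more than `ε` after `N p` steps (sensitivity of `f⁻¹`). Each `s : ℕ → Bool` chooses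
which jumps are taken; shadowing the resulting pseudo-orbits gives an injection of the Cantor
space into `W^s_ε(x)`, so this closed set is uncountable and hence contains a nonempty perfect
set (Cantor–Bendixson). -/

lemma isClosed_Ws [MetricSpace X] {f : X → X} (hf : Continuous f) (ε : ℝ) (x : X) :
    IsClosed (Ws f ε x) := by
  simp only [Ws, Set.ofPred_forall]
  exact isClosed_iInter fun k =>
    isClosed_le ((hf.iterate k).dist continuous_const) continuous_const

lemma zIter_natCast [TopologicalSpace X] (f : X ≃ₜ X) (n : ℕ) (y : X) :
    zIter f n y = f^[n] y := by
  simp only [zIter, zpow_natCast, ← Equiv.Perm.iterate_eq_pow]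
  rfl

lemma Shadowing.exists_shadow_of_backward_pseudoOrbit [MetricSpace X] {f : X ≃ₜ X}
    (hsh : Shadowing f) {ε : ℝ} (hε : 0 < ε) :
    ∃ δ > 0, ∀ (x : X) (z : ℕ → X), z 0 = x → (∀ t, dist (f (z (t + 1))) (z t) < δ) →
      ∃ y, (∀ n : ℕ, dist (f^[n] y) (f^[n] x) < ε) ∧
        ∀ t : ℕ, dist (zIter f (-t) y) (z t) < ε := by
  obtain ⟨δ, hδ, hshadow⟩ := hsh ε hε
  refine ⟨δ, hδ, fun x z hz0 hz => ?_⟩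
  set ξ : ℤ → X := fun n => if 0 ≤ n then f^[n.toNat] x else z (-n).toNat
  have hξ_nat (n : ℕ) : ξ n = f^[n] x := by simp [ξ]
  have hξ_neg (t : ℕ) : ξ (-t) = z t := by
    rcases t with _ | t
    · simp [ξ, hz0]
    · simp only [ξ]
      rw [if_neg (by omega)]
      congr
  obtain ⟨y, hy⟩ := hshadow ξ fun n => by
    rcases Int.eq_nat_or_neg n with ⟨m, rfl | rfl⟩
    · rw [hξ_nat, ← Nat.cast_succ, hξ_nat, ← iterate_succ_apply' f, dist_self]
      exact hδ
    · rcases m with _ | t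
      · rw [Nat.cast_zero, neg_zero, zero_add, ← Nat.cast_zero, ← Nat.cast_one, hξ_nat, hξ_nat]
        simpa using hδ
      · rw [show -((t + 1 : ℕ) : ℤ) + 1 = -t by push_cast; ring, hξ_neg, hξ_neg]
        exact hz t
  refine ⟨y, fun n => ?_, fun t => ?_⟩
  · simpa only [zIter_natCast, hξ_nat] using hy n
  · simpa only [hξ_neg] using hy (-t)

lemma exists_perfect_subset_of_injective [MetricSpace X] [CompactSpace X] {α : Type*}
    [Uncountable α] {W : Set X} (hW : IsClosed W) {Y : α → X} (hY : Injective Y)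
    (hYW : ∀ a, Y a ∈ W) : ∃ C : Set X, C.Nonempty ∧ IsCompact C ∧ Perfect C ∧ C ⊆ W := by
  have hunc : ¬ W.Countable := fun hc =>
    Set.not_countable_univ (by
      simpa using (hc.mono (Set.range_subset_iff.mpr hYW)).preimage hY)
  obtain ⟨C, hC, hCne, hCW⟩ := exists_perfect_nonempty_of_isClosed_of_not_countable hW hunc
  exact ⟨C, hCne, hC.closed.isCompact, hC, hCW⟩

instance : Uncountable (ℕ → Bool) := by
  rw [← Cardinal.aleph0_lt_mk_iff]
  simpa using Cardinal.cantor Cardinal.aleph0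

section Branching

variable (g Q : X → X) (N : X → ℕ)

/-- A state `(z, c, k)` records the current point `z`, the number `c` of steps left before the
next branch point, and the number `k` of branch points passed; at a branch point `p` the bit
`s k` decides whether to jump to `Q p`. -/
def branchStep (s : ℕ → Bool) : X × ℕ × ℕ → X × ℕ × ℕ
  | (p, 0, k) => (g (if s k then Q p else p), N p - 1, k + 1)
  | (z, c + 1, k) => (g z, c, k)

def branchOrbit (s : ℕ → Bool) (x : X) : ℕ → X × ℕ × ℕ
  | 0 => (x, 0, 0)
  | t + 1 => branchStep g Q N s (branchOrbit s x t)

variable {g Q N}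

lemma dist_branchOrbit_succ_lt [MetricSpace X] {f : X → X} (hfg : ∀ y, f (g y) = y) {δ : ℝ}
    (hδ : 0 < δ) (hQ : ∀ p, dist p (Q p) < δ) (s : ℕ → Bool) (x : X) (t : ℕ) :
    dist (f (branchOrbit g Q N s x (t + 1)).1) (branchOrbit g Q N s x t).1 < δ := by
  rcases h : branchOrbit g Q N s x t with ⟨p, _ | c, k⟩
  · simp only [branchOrbit, h, branchStep, hfg]
    split
    · exact dist_comm p (Q p) ▸ hQ p
    · simpa using hδ
  · simpa [branchOrbit, h, branchStep, hfg] using hδ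

lemma branchOrbit_add {s : ℕ → Bool} {x p : X} {t k : ℕ}
    (ht : branchOrbit g Q N s x t = (p, 0, k)) {m : ℕ} (hm : 1 ≤ m) (hmN : m ≤ N p) :
    branchOrbit g Q N s x (t + m) = (g^[m] (if s k then Q p else p), N p - m, k + 1) := by
  induction m, hm using Nat.le_induction with
  | base => simp [branchOrbit, ht, branchStep]
  | succ m hm ih =>
    rw [← add_assoc, branchOrbit, ih (by omega)]
    obtain ⟨c, hc⟩ : ∃ c, N p - m = c + 1 := ⟨N p - m - 1, by omega⟩
    simp only [hc, branchStep, iterate_succ_apply']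
    congr 2
    omega

lemma branchOrbit_add_self (hN : ∀ p, 1 ≤ N p) {s : ℕ → Bool} {x p : X} {t k : ℕ}
    (ht : branchOrbit g Q N s x t = (p, 0, k)) :
    branchOrbit g Q N s x (t + N p) = (g^[N p] (if s k then Q p else p), 0, k + 1) := by
  rw [branchOrbit_add ht (hN p) le_rfl, Nat.sub_self]

lemma exists_branchOrbit_eq_of_eqOn (hN : ∀ p, 1 ≤ N p) {s s' : ℕ → Bool} (x : X) {k : ℕ}
    (hss' : ∀ j < k, s j = s' j) :
    ∃ t p, branchOrbit g Q N s x t = (p, 0, k) ∧ branchOrbit g Q N s' x t = (p, 0, k) := by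
  induction k with
  | zero => exact ⟨0, x, rfl, rfl⟩
  | succ k ih =>
    obtain ⟨t, p, ht, ht'⟩ := ih fun j hj => hss' j (by omega)
    refine ⟨t + N p, _, branchOrbit_add_self hN ht, ?_⟩
    rw [branchOrbit_add_self hN ht', hss' k (by omega)]

lemma exists_lt_dist_branchOrbit [MetricSpace X] (hN : ∀ p, 1 ≤ N p) {ε : ℝ}
    (hsep : ∀ p, ε < dist (g^[N p] p) (g^[N p] (Q p))) {s s' : ℕ → Bool} (hne : s ≠ s')
    (x : X) : ∃ t, ε < dist (branchOrbit g Q N s x t).1 (branchOrbit g Q N s' x t).1 := by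
  have hdiff : ∃ k, s k ≠ s' k := Function.ne_iff.mp hne
  set k := Nat.find hdiff
  obtain ⟨t, p, ht, ht'⟩ := exists_branchOrbit_eq_of_eqOn hN x (k := k) fun j hj => by
    simpa using Nat.find_min hdiff hj
  refine ⟨t + N p, ?_⟩
  rw [branchOrbit_add_self hN ht, branchOrbit_add_self hN ht']
  have hk : s k ≠ s' k := Nat.find_spec hdiff
  generalize s k = b at hk ⊢
  generalize s' k = b' at hk ⊢
  cases b <;> cases b' <;> simp_all [dist_comm]

end Branching

/-- If a homeomorphism of a compact metric space has the shadowing property and its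
inverse is sensitive with sensitivity constant `ε > 0`, then each local stable set
`W^s_ε(x)` contains a nonempty compact perfect set. -/
theorem stmt14 [MetricSpace X] [CompactSpace X] (f : X ≃ₜ X) (hsh : Shadowing f)
    (ε : ℝ) (hε : 0 < ε) (hsens : SensitiveWith (f.symm : X → X) ε) :
    ∀ x : X, ∃ C : Set X, C.Nonempty ∧ IsCompact C ∧ Perfect C ∧
      C ⊆ Ws (f : X → X) ε x := by
  intro x
  obtain ⟨δ, hδ, hshadow⟩ := hsh.exists_shadow_of_backward_pseudoOrbit (half_pos hε)
  choose Q hQ N hsep using fun p => hsens p (min δ ε) (lt_min hδ hε)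
  have hN : ∀ p, 1 ≤ N p := by
    intro p
    by_contra! h0
    have hlt := hsep p
    simp only [Nat.lt_one_iff.mp h0, iterate_zero, id_eq] at hlt
    linarith [(hQ p).trans_le (min_le_right δ ε)]
  choose Y hYx hYz using fun s : ℕ → Bool =>
    hshadow x (fun t => (branchOrbit f.symm Q N s x t).1) rfl fun t =>
      dist_branchOrbit_succ_lt f.apply_symm_apply hδ
        (fun p => (hQ p).trans_le (min_le_left δ ε)) s x t
  refine exists_perfect_subset_of_injective (isClosed_Ws f.continuous ε x) (Y := Y)
    (fun s s' hY => ?_) fun s k => ((hYx s k).le.trans (half_le_self hε.le))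
  by_contra hne
  obtain ⟨t, ht⟩ := exists_lt_dist_branchOrbit hN hsep hne x
  have h₁ := hYz s t
  have h₂ := hYz s' t
  rw [hY] at h₁
  linarith [dist_triangle_left (branchOrbit f.symm Q N s x t).1
    (branchOrbit f.symm Q N s' x t).1 (zIter f (-t) (Y s'))]
end

section
/- Let $X$ be a compact metric space and $f: X \to X$ a continuous map that is topologically transitive and not uniformly rigid. Then there exists $\gamma > 0$ such that for every transitive point $p$ of $f$ and every $m \in \mathbb{N}$ there is $\tau = \tau(p,m) \in \mathbb{N}$ with $d(f^{\tau}(p), f^{\tau}(f^m(p))) > \gamma$. -/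
/-!
Failure of uniform rigidity yields `ε > 0` such that every iterate `f^[m]`, `m ≥ 1`, moves
some point `x` by at least `ε`: otherwise, since displacements add up along iterates,
arbitrarily late iterates would be uniformly `1/(k+1)`-close to the identity for every `k`,
and a diagonal extraction would make `f` uniformly rigid. The set of points moved by more
than `ε / 2` under `f^[m]` is open and contains `x`, so the dense orbit of a transitive
point `p` enters it at some time `τ`; as `f^[τ]` and `f^[m]` commute this is the claim.
-/

open Function Metric Filter

variable {X : Type*}

/-- `p` is a transitive point: its forward orbit is dense. -/
def TransitivePoint [TopologicalSpace X] (f : X → X) (p : X) : Prop :=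
  Dense (Set.range fun n : ℕ => f^[n] p)
/-- `f` is uniformly rigid: some subsequence of iterates converges uniformly to the
identity. -/
def UniformlyRigid [MetricSpace X] (f : X → X) : Prop :=
  ∃ n : ℕ → ℕ, StrictMono n ∧ (∀ k, 0 < n k) ∧
    TendstoUniformly (fun k x => f^[n k] x) id Filter.atTop

lemma dist_iterate_mul_le [PseudoMetricSpace X] {f : X → X} {m : ℕ} {δ : ℝ}
    (h : ∀ x, dist (f^[m] x) x ≤ δ) (j : ℕ) (x : X) : dist (f^[j * m] x) x ≤ j * δ := by
  induction j with
  | zero => simp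
  | succ j ih =>
    calc dist (f^[(j + 1) * m] x) x
        ≤ dist (f^[m] (f^[j * m] x)) (f^[j * m] x) + dist (f^[j * m] x) x := by
          rw [add_mul, one_mul, add_comm, iterate_add_apply]; exact dist_triangle _ _ _
      _ ≤ δ + j * δ := add_le_add (h _) ih
      _ = (j + 1 : ℕ) * δ := by push_cast; ring

lemma uniformlyRigid_of_forall_exists_dist_lt [MetricSpace X] {f : X → X}
    (h : ∀ ε > 0, ∃ n, 0 < n ∧ ∀ x, dist (f^[n] x) x < ε) : UniformlyRigid f := by
  have hfreq : ∀ k : ℕ, ∃ᶠ n in atTop, 0 < n ∧ ∀ x, dist (f^[n] x) x ≤ 1 / (k + 1) := by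
    intro k
    rw [frequently_atTop]
    intro N
    obtain ⟨m, hm, hmδ⟩ := h (1 / (k + 1) / (N + 1)) (by positivity)
    refine ⟨(N + 1) * m, by nlinarith, by positivity, fun x => ?_⟩
    calc dist (f^[(N + 1) * m] x) x ≤ (N + 1 : ℕ) * (1 / (k + 1) / (N + 1)) :=
          dist_iterate_mul_le (fun y => (hmδ y).le) _ x
      _ = 1 / (k + 1) := by push_cast; field_simp
  obtain ⟨φ, hφ, hP⟩ := extraction_forall_of_frequently hfreq
  refine ⟨φ, hφ, fun k => (hP k).1, ?_⟩
  rw [Metric.tendstoUniformly_iff]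
  intro ε hε
  obtain ⟨K, hK⟩ := exists_nat_one_div_lt hε
  filter_upwards [eventually_ge_atTop K] with k hk x
  rw [id, dist_comm]
  calc dist (f^[φ k] x) x ≤ 1 / (k + 1) := (hP k).2 x
    _ ≤ 1 / (K + 1) := by gcongr
    _ < ε := hK

lemma TransitivePoint.exists_lt_dist_apply [PseudoMetricSpace X] {f g : X → X} {p x : X}
    {c : ℝ} (hp : TransitivePoint f p) (hg : Continuous g) (hx : c < dist (g x) x) :
    ∃ τ, c < dist (f^[τ] p) (g (f^[τ] p)) := by
  have hopen : IsOpen {y | c < dist y (g y)} := isOpen_lt continuous_const (continuous_id.dist hg)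
  obtain ⟨_, ⟨τ, rfl⟩, hτ⟩ := hp.exists_mem_open hopen ⟨x, by rwa [Set.mem_ofPred, dist_comm]⟩
  exact ⟨τ, hτ⟩

theorem stmt16_general [MetricSpace X] (f : X → X) (hc : Continuous f)
    (hrig : ¬ UniformlyRigid f) :
    ∃ γ : ℝ, 0 < γ ∧ ∀ p : X, TransitivePoint f p → ∀ m : ℕ, 0 < m →
      ∃ τ : ℕ, γ < dist (f^[τ] p) (f^[τ] (f^[m] p)) := by
  obtain ⟨ε, hε, hdisp⟩ : ∃ ε > 0, ∀ n, 0 < n → ∃ x, ε ≤ dist (f^[n] x) x := by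
    by_contra! h
    exact hrig (uniformlyRigid_of_forall_exists_dist_lt h)
  refine ⟨ε / 2, by positivity, fun p hp m hm => ?_⟩
  obtain ⟨x, hx⟩ := hdisp m hm
  obtain ⟨τ, hτ⟩ := hp.exists_lt_dist_apply (hc.iterate m) (by linarith : ε / 2 < dist (f^[m] x) x)
  exact ⟨τ, by rwa [← iterate_add_apply, add_comm, iterate_add_apply]⟩

/-- If a continuous map of a compact metric space is topologically transitive and not
uniformly rigid, then there is `γ > 0` such that for every transitive point `p` and every
`m ≥ 1` there is `τ ∈ ℕ` with `d(f^τ(p), f^τ(f^m(p))) > γ`. -/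
theorem stmt16 [MetricSpace X] [CompactSpace X] (f : X → X) (hc : Continuous f)
    (htrans : ∃ p : X, TransitivePoint f p) (hrig : ¬ UniformlyRigid f) :
    ∃ γ : ℝ, 0 < γ ∧ ∀ p : X, TransitivePoint f p → ∀ m : ℕ, 0 < m →
      ∃ τ : ℕ, γ < dist (f^[τ] p) (f^[τ] (f^[m] p)) :=
  stmt16_general f hc hrig
end
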